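/- arXiv:2309.13447 — 9 statements merged into one kernel-verified Lean document; each statement's English description precedes it below -/
import Mathlib

section
/- Let (p_n)_{n≥1} be a sequence of polynomials over ℂ with deg p_1 ≥ 1 and deg p_n ≥ 2 for all n ≥ 2, and set α := limsup_{n→∞} 1/(deg p_n). Assume there exist r > 0 and a function h : ℂ → ℝ with h(z) − α·log|z| → ∞ as |z| → ∞, such that: (i) every zero of every p_n lies in the closed disk of radius r centered at 0; (ii) for every z ∈ ℂ with |z| > r there exist a neighbourhood U of z and an integer N > 1 such that for all n ≥ N and all ζ ∈ U one has (1/deg p_n)·log⁺|p_n(ζ)| > h(ζ). Then there exists R > 0 such that for every n ≥ 2 and every z ∈ ℂ with |z| ≥ R one has |p_n(z)| ≥ e·|z|. -/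
/-!
Since all zeros lie in the disk of radius `r`, `|p_n(z)|` is squeezed between
`|a_n| (|z| - r)^{d_n}` and `|a_n| (|z| + r)^{d_n}`, where `a_n` is the leading coefficient and
`d_n = deg p_n`. Because `α ≥ 0`, the function `h` is nonnegative at some point `ζ₀` with
`|ζ₀| > r`, so the growth hypothesis at `ζ₀` gives `|p_n(ζ₀)| > 1` for all large `n`, whence
`|a_n| K^{d_n} ≥ 1` with `K = |ζ₀| + r`. Then `|p_n(z)| ≥ ((|z| - r) / K)^2` uniformly in those `n`,
which beats `e |z|` for large `|z|`; the finitely many remaining `p_n` are handled one by one.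
-/

open Filter Polynomial

section RootBounds

variable {𝕜 : Type*} [NormedField 𝕜] [IsAlgClosed 𝕜] {q : 𝕜[X]} {r : ℝ}

theorem Polynomial.norm_eval_eq_norm_leadingCoeff_mul_prod_roots (q : 𝕜[X]) (z : 𝕜) :
    ‖q.eval z‖ = ‖q.leadingCoeff‖ * (q.roots.map fun a => ‖z - a‖).prod := by
  conv_lhs => rw [(IsAlgClosed.splits q).eq_prod_roots]
  rw [eval_mul, eval_C, norm_mul, eval_multiset_prod]
  congr 1
  simpa [Multiset.map_map, Function.comp_def] using
    map_multiset_prod (normHom : 𝕜 →*₀ ℝ) (q.roots.map (z - ·))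

theorem Polynomial.norm_leadingCoeff_mul_sub_pow_le_norm_eval
    (hroots : ∀ a ∈ q.roots, ‖a‖ ≤ r) {z : 𝕜} (hz : r ≤ ‖z‖) :
    ‖q.leadingCoeff‖ * (‖z‖ - r) ^ q.natDegree ≤ ‖q.eval z‖ := by
  rw [norm_eval_eq_norm_leadingCoeff_mul_prod_roots, (IsAlgClosed.splits q).natDegree_eq_card_roots,
    ← Multiset.prod_replicate, ← Multiset.map_const']
  gcongr
  refine Multiset.prod_map_le_prod_map₀ _ _ (fun _ _ => sub_nonneg.2 hz) fun a ha => ?_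
  linarith [hroots a ha, norm_sub_norm_le z a]

theorem Polynomial.norm_eval_le_norm_leadingCoeff_mul_add_pow
    (hroots : ∀ a ∈ q.roots, ‖a‖ ≤ r) (z : 𝕜) :
    ‖q.eval z‖ ≤ ‖q.leadingCoeff‖ * (‖z‖ + r) ^ q.natDegree := by
  rw [norm_eval_eq_norm_leadingCoeff_mul_prod_roots, (IsAlgClosed.splits q).natDegree_eq_card_roots,
    ← Multiset.prod_replicate, ← Multiset.map_const']
  gcongr
  refine Multiset.prod_map_le_prod_map₀ _ _ (fun _ _ => norm_nonneg _) fun a ha => ?_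
  linarith [hroots a ha, norm_sub_le z a]

theorem Polynomial.sq_le_norm_eval_of_one_le_norm_leadingCoeff_mul_pow {K : ℝ}
    (hd : 2 ≤ q.natDegree) (hroots : ∀ a ∈ q.roots, ‖a‖ ≤ r) (hK : 0 < K)
    (hlead : 1 ≤ ‖q.leadingCoeff‖ * K ^ q.natDegree) {z : 𝕜} (hz : r + K ≤ ‖z‖) :
    ((‖z‖ - r) / K) ^ 2 ≤ ‖q.eval z‖ :=
  calc ((‖z‖ - r) / K) ^ 2
      ≤ ((‖z‖ - r) / K) ^ q.natDegree :=
        pow_le_pow_right₀ ((one_le_div hK).2 (by linarith)) hd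
    _ ≤ ‖q.leadingCoeff‖ * K ^ q.natDegree * ((‖z‖ - r) / K) ^ q.natDegree :=
        le_mul_of_one_le_left (pow_nonneg (div_nonneg (by linarith) hK.le) _) hlead
    _ = ‖q.leadingCoeff‖ * (‖z‖ - r) ^ q.natDegree := by
        rw [div_pow]; field_simp
    _ ≤ ‖q.eval z‖ := norm_leadingCoeff_mul_sub_pow_le_norm_eval hroots (by linarith)

theorem mul_le_sq_sub_div {r K C t : ℝ} (hr : 0 ≤ r) (hK : 0 < K) (hrt : 2 * r ≤ t)
    (hCt : 4 * C * K ^ 2 ≤ t) : C * t ≤ ((t - r) / K) ^ 2 := by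
  rw [div_pow, le_div_iff₀ (by positivity)]
  nlinarith

theorem Polynomial.eventually_mul_norm_le_norm_eval {K : ℝ} (hr : 0 ≤ r) (hK : 0 < K) (C : ℝ) :
    ∀ᶠ t in atTop, ∀ q : 𝕜[X], 2 ≤ q.natDegree → (∀ a ∈ q.roots, ‖a‖ ≤ r) →
      1 ≤ ‖q.leadingCoeff‖ * K ^ q.natDegree → ∀ z : 𝕜, t ≤ ‖z‖ → C * ‖z‖ ≤ ‖q.eval z‖ := by
  filter_upwards [eventually_ge_atTop (2 * r), eventually_ge_atTop (r + K),
    eventually_ge_atTop (4 * C * K ^ 2)] with t hrt hKt hCt q hd hroots hlead z hz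
  exact (mul_le_sq_sub_div hr hK (hrt.trans hz) (hCt.trans hz)).trans
    (sq_le_norm_eval_of_one_le_norm_leadingCoeff_mul_pow hd hroots hK hlead (hKt.trans hz))

theorem Polynomial.eventually_mul_norm_le_norm_eval_of_two_le_natDegree
    (hd : 2 ≤ q.natDegree) (hr : 0 ≤ r) (hroots : ∀ a ∈ q.roots, ‖a‖ ≤ r) (C : ℝ) :
    ∀ᶠ t in atTop, ∀ z : 𝕜, t ≤ ‖z‖ → C * ‖z‖ ≤ ‖q.eval z‖ := by
  have hlead : 0 < ‖q.leadingCoeff‖ := by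
    rw [norm_pos_iff, leadingCoeff_ne_zero]
    rintro rfl
    simp at hd
  set K := max 1 ‖q.leadingCoeff‖⁻¹
  have hK : 1 ≤ K := le_max_left _ _
  have hKlead : 1 ≤ ‖q.leadingCoeff‖ * K ^ q.natDegree :=
    calc 1 = ‖q.leadingCoeff‖ * ‖q.leadingCoeff‖⁻¹ := (mul_inv_cancel₀ hlead.ne').symm
      _ ≤ ‖q.leadingCoeff‖ * K := by gcongr; exact le_max_right _ _
      _ ≤ ‖q.leadingCoeff‖ * K ^ q.natDegree := by
        gcongr; exact le_self_pow₀ hK (by omega)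
  exact (eventually_mul_norm_le_norm_eval hr (by positivity) C).mono
    fun t ht => ht q hd hroots hKlead

end RootBounds

theorem one_lt_abs_of_nonneg_lt_mul_posLog {a c x : ℝ} (ha : 0 ≤ a) (h : a < c * Real.posLog x) :
    1 < |x| := by
  by_contra! hx
  rw [(Real.posLog_eq_zero_iff x).2 hx, mul_zero] at h
  linarith

theorem limsup_one_div_natCast_nonneg (d : ℕ → ℕ) :
    0 ≤ limsup (fun n => (1 : ℝ) / d n) atTop :=
  le_limsup_of_frequently_le (Frequently.of_forall fun _ => by positivity)
    (isBoundedUnder_of ⟨1, fun n => by simpa using Nat.cast_inv_le_one (d n)⟩)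

theorem guided_growth_lemma_general
    (p : ℕ → Polynomial ℂ)
    (hdeg : ∀ n ≥ 2, 2 ≤ (p n).natDegree)
    (α : ℝ)
    (hα : α = Filter.limsup (fun n => (1 : ℝ) / ((p n).natDegree : ℝ)) Filter.atTop)
    (r : ℝ) (hr : 0 < r)
    (h : ℂ → ℝ)
    (hh : Filter.Tendsto (fun z : ℂ => h z - α * Real.log (‖z‖))
      (Filter.comap (fun z : ℂ => ‖z‖) Filter.atTop) Filter.atTop)
    (hzeros : ∀ n ≥ 1, ∀ z : ℂ, (p n).eval z = 0 → ‖z‖ ≤ r)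
    (hgrow : ∀ z : ℂ, r < ‖z‖ →
      ∃ U ∈ nhds z, ∃ N : ℕ, 1 < N ∧ ∀ n ≥ N, ∀ ζ ∈ U,
        h ζ < (1 / ((p n).natDegree : ℝ)) * max 0 (Real.log (‖(p n).eval ζ‖))) :
    ∃ R : ℝ, 0 < R ∧ ∀ n ≥ 2, ∀ z : ℂ, R ≤ ‖z‖ →
      Real.exp 1 * ‖z‖ ≤ ‖(p n).eval z‖ := by
  have hroots : ∀ n ≥ 1, ∀ a ∈ (p n).roots, ‖a‖ ≤ r :=
    fun n hn a ha => hzeros n hn a (isRoot_of_mem_roots ha)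
  have hα0 : 0 ≤ α := hα ▸ limsup_one_div_natCast_nonneg _
  obtain ⟨ζ₀, hζ₀r, hζ₀h⟩ : ∃ ζ₀ : ℂ, r < ‖ζ₀‖ ∧ 0 ≤ h ζ₀ := by
    rw [comap_norm_atTop] at hh
    have hfar : ∀ᶠ z : ℂ in Bornology.cobounded ℂ, max 1 r < ‖z‖ :=
      tendsto_norm_cobounded_atTop.eventually (eventually_gt_atTop _)
    obtain ⟨z, hz, hhz⟩ := (hfar.and (hh.eventually (eventually_ge_atTop 0))).exists
    have : 0 ≤ α * Real.log ‖z‖ :=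
      mul_nonneg hα0 (Real.log_nonneg ((le_max_left _ _).trans hz.le))
    exact ⟨z, (le_max_right _ _).trans_lt hz, by linarith⟩
  obtain ⟨U, hU, N, hN, hgrowN⟩ := hgrow ζ₀ hζ₀r
  have hlead : ∀ n ≥ N, 1 ≤ ‖(p n).leadingCoeff‖ * (‖ζ₀‖ + r) ^ (p n).natDegree := by
    intro n hn
    have hbig : 1 < ‖(p n).eval ζ₀‖ := by
      simpa using one_lt_abs_of_nonneg_lt_mul_posLog hζ₀h (hgrowN n hn ζ₀ (mem_of_mem_nhds hU))
    exact hbig.le.trans (norm_eval_le_norm_leadingCoeff_mul_add_pow (hroots n (by omega)) ζ₀)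
  have hsmall : ∀ᶠ t in atTop, ∀ n ∈ Finset.Ico 2 N, ∀ z : ℂ, t ≤ ‖z‖ →
      Real.exp 1 * ‖z‖ ≤ ‖(p n).eval z‖ :=
    (eventually_all_finset _).2 fun n hn => eventually_mul_norm_le_norm_eval_of_two_le_natDegree
      (hdeg n (Finset.mem_Ico.1 hn).1) hr.le (hroots n (by grind)) _
  have hlarge := eventually_mul_norm_le_norm_eval (𝕜 := ℂ) hr.le
    (by positivity : 0 < ‖ζ₀‖ + r) (Real.exp 1)
  obtain ⟨R, hR, hRsmall, hRlarge⟩ := ((eventually_gt_atTop 0).and (hsmall.and hlarge)).exists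
  refine ⟨R, hR, fun n hn z hz => ?_⟩
  rcases lt_or_ge n N with hnN | hnN
  · exact hRsmall n (Finset.mem_Ico.2 ⟨hn, hnN⟩) z hz
  · exact hRlarge (p n) (hdeg n hn) (hroots n (by omega)) (hlead n hnN) z hz

theorem guided_growth_lemma
    (p : ℕ → Polynomial ℂ)
    (hdeg1 : 1 ≤ (p 1).natDegree)
    (hdeg : ∀ n ≥ 2, 2 ≤ (p n).natDegree)
    (α : ℝ)
    (hα : α = Filter.limsup (fun n => (1 : ℝ) / ((p n).natDegree : ℝ)) Filter.atTop)
    (r : ℝ) (hr : 0 < r)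
    (h : ℂ → ℝ)
    (hh : Filter.Tendsto (fun z : ℂ => h z - α * Real.log (‖z‖))
      (Filter.comap (fun z : ℂ => ‖z‖) Filter.atTop) Filter.atTop)
    (hzeros : ∀ n ≥ 1, ∀ z : ℂ, (p n).eval z = 0 → ‖z‖ ≤ r)
    (hgrow : ∀ z : ℂ, r < ‖z‖ →
      ∃ U ∈ nhds z, ∃ N : ℕ, 1 < N ∧ ∀ n ≥ N, ∀ ζ ∈ U,
        h ζ < (1 / ((p n).natDegree : ℝ)) * max 0 (Real.log (‖(p n).eval ζ‖))) :
    ∃ R : ℝ, 0 < R ∧ ∀ n ≥ 2, ∀ z : ℂ, R ≤ ‖z‖ →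
      Real.exp 1 * ‖z‖ ≤ ‖(p n).eval z‖ :=
  guided_growth_lemma_general p hdeg α hα r hr h hh hzeros hgrow
end

section
/- Let (p_n)_{n≥1} be a sequence of polynomials over ℂ with deg p_1 ≥ 1 and deg p_n ≥ 2 for all n ≥ 2, and set α := limsup_{n→∞} 1/(deg p_n). Assume there exist r > 0 and a function h : ℂ → ℝ with h(z) − α·log|z| → ∞ as |z| → ∞, such that: (i) every zero of every p_n lies in the closed disk of radius r centered at 0; (ii) for every z ∈ ℂ with |z| > r there exist a neighbourhood U of z and an integer N > 1 such that for all n ≥ N and all ζ ∈ U one has (1/deg p_n)·log⁺|p_n(ζ)| > h(ζ). Then there exists ϱ > 0 such that for every R ≥ ϱ and every n ≥ 2 the preimage p_n⁻¹(closed disk of radius R centered at 0) is contained in the closed disk of radius R centered at 0. -/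
/-!
Since `α ≥ 0`, the hypothesis on `h` makes `h ≥ 0` far out, so at one point `z₀` with
`‖z₀‖ > |r|` the growth condition forces `‖pₙ(z₀)‖ > 1` for all large `n`. Factoring `pₙ` over
its roots, which lie in the disk of radius `r`, this says `‖lc pₙ‖ (‖z₀‖ + r)^{deg pₙ} > 1`.
Together with the finitely many remaining `n` this gives one `c > 0` with
`‖pₙ(z)‖ ≥ c (‖z‖ - r)²` for all `n ≥ 2` and all large `z`, and this exceeds `‖z‖` eventually.
-/

open Filter Polynomial

lemma limsup_nonneg_of_nonneg {ι : Type*} {f : Filter ι} [f.NeBot] {u : ι → ℝ}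
    (h : ∀ i, 0 ≤ u i) : 0 ≤ limsup u f := by
  rw [limsup_eq]
  exact Real.sInf_nonneg fun a ha ↦ let ⟨i, hi⟩ := ha.exists; (h i).trans hi

lemma eventually_nonneg_of_tendsto_sub_mul_log {E : Type*} [SeminormedAddCommGroup E]
    {h : E → ℝ} {α : ℝ} (hα : 0 ≤ α)
    (hh : Tendsto (fun z ↦ h z - α * Real.log ‖z‖) (comap (fun z ↦ ‖z‖) atTop) atTop) :
    ∀ᶠ z in comap (fun z ↦ ‖z‖) atTop, 0 ≤ h z := by
  filter_upwards [hh.eventually_ge_atTop 0, tendsto_comap.eventually_ge_atTop 1] with z hz hz1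
  nlinarith [Real.log_nonneg hz1]

lemma one_lt_of_nonneg_lt_mul_max_zero_log {a b x : ℝ} (ha : 0 ≤ a)
    (h : a < b * max 0 (Real.log x)) (hx : 0 ≤ x) : 1 < x := by
  by_contra! hx1
  rw [max_eq_left (Real.log_nonpos hx hx1), mul_zero] at h
  exact h.not_ge ha

lemma le_mul_sub_sq {c r x : ℝ} (hc : 0 < c) (hr : 2 * r ≤ x) (hcx : 4 / c ≤ x) :
    x ≤ c * (x - r) ^ 2 := by
  have hx : 0 < x := (div_pos four_pos hc).trans_le hcx
  have h4 : 4 ≤ c * x := by rwa [div_le_iff₀ hc, mul_comm] at hcx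
  have hsq : (x / 2) ^ 2 ≤ (x - r) ^ 2 := pow_le_pow_left₀ (half_pos hx).le (by linarith) 2
  nlinarith [mul_le_mul_of_nonneg_left hsq hc.le]

lemma exists_pos_forall_le_of_eventually {f : ℕ → ℝ} {m : ℕ} {c₀ : ℝ} (hc₀ : 0 < c₀)
    (hpos : ∀ n ≥ m, 0 < f n) (hev : ∀ᶠ n in atTop, c₀ ≤ f n) : ∃ c > 0, ∀ n ≥ m, c ≤ f n := by
  obtain ⟨N, hN⟩ := eventually_atTop.1 hev
  set S := insert c₀ ((Finset.Ico m N).image f)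
  have hS : S.Nonempty := Finset.insert_nonempty _ _
  refine ⟨S.min' hS, (Finset.lt_min'_iff _ _).2 ?_, fun n hn ↦ ?_⟩
  · simp only [S, Finset.forall_mem_insert, Finset.forall_mem_image, Finset.mem_Ico]
    exact ⟨hc₀, fun n hn ↦ hpos n hn.1⟩
  · rcases lt_or_ge n N with hnN | hnN
    · exact S.min'_le _ <| Finset.mem_insert_of_mem <|
        Finset.mem_image_of_mem f (Finset.mem_Ico.2 ⟨hn, hnN⟩)
    · exact (S.min'_le _ (Finset.mem_insert_self _ _)).trans (hN n hnN)

namespace Polynomial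

lemma norm_eval_eq_mul_prod_roots (p : ℂ[X]) (z : ℂ) :
    ‖p.eval z‖ = ‖p.leadingCoeff‖ * (p.roots.map fun a ↦ ‖z - a‖).prod := by
  rw [(IsAlgClosed.splits p).eval_eq_prod_roots, norm_mul, ← normHom_apply (Multiset.prod _),
    map_multiset_prod, Multiset.map_map]
  rfl

variable {p : ℂ[X]} {r : ℝ}

lemma norm_leadingCoeff_mul_pow_le_norm_eval (hroots : ∀ a, p.IsRoot a → ‖a‖ ≤ r) {z : ℂ}
    (hz : r ≤ ‖z‖) : ‖p.leadingCoeff‖ * (‖z‖ - r) ^ p.natDegree ≤ ‖p.eval z‖ := by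
  rw [norm_eval_eq_mul_prod_roots, (IsAlgClosed.splits p).natDegree_eq_card_roots,
    ← Multiset.prod_replicate, ← Multiset.map_const']
  gcongr
  refine Multiset.prod_map_le_prod_map₀ _ _ (fun _ _ ↦ sub_nonneg.2 hz) fun a ha ↦ ?_
  have har := hroots a (mem_roots'.1 ha).2
  have htri := norm_sub_norm_le z a
  linarith

lemma norm_eval_le_norm_leadingCoeff_mul_pow (hroots : ∀ a, p.IsRoot a → ‖a‖ ≤ r) (z : ℂ) :
    ‖p.eval z‖ ≤ ‖p.leadingCoeff‖ * (‖z‖ + r) ^ p.natDegree := by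
  rw [norm_eval_eq_mul_prod_roots, (IsAlgClosed.splits p).natDegree_eq_card_roots,
    ← Multiset.prod_replicate, ← Multiset.map_const']
  gcongr
  refine Multiset.prod_map_le_prod_map₀ _ _ (fun _ _ ↦ norm_nonneg _) fun a ha ↦ ?_
  have har := hroots a (mem_roots'.1 ha).2
  have htri := norm_sub_le z a
  linarith

end Polynomial

lemma exists_pos_mul_sq_le_norm_eval {p : ℕ → ℂ[X]} {r K : ℝ} (hK : 0 < K)
    (hdeg : ∀ n ≥ 2, 2 ≤ (p n).natDegree) (hroots : ∀ n ≥ 2, ∀ a, (p n).IsRoot a → ‖a‖ ≤ r)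
    (hlarge : ∀ᶠ n in atTop, 1 ≤ ‖(p n).leadingCoeff‖ * K ^ (p n).natDegree) :
    ∃ c > 0, ∀ n ≥ 2, ∀ z : ℂ, K + r ≤ ‖z‖ → c * (‖z‖ - r) ^ 2 ≤ ‖(p n).eval z‖ := by
  have hsplit {n : ℕ} (hn : 2 ≤ n) (x : ℝ) :
      x ^ ((p n).natDegree - 2) * x ^ 2 = x ^ (p n).natDegree := by
    rw [← pow_add, Nat.sub_add_cancel (hdeg n hn)]
  obtain ⟨c, hc, hcle⟩ := exists_pos_forall_le_of_eventually (m := 2)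
    (f := fun n ↦ ‖(p n).leadingCoeff‖ * K ^ ((p n).natDegree - 2)) (inv_pos.2 (pow_pos hK 2))
    (fun n hn ↦ mul_pos (norm_pos_iff.2 (leadingCoeff_ne_zero.2
      (ne_zero_of_natDegree_gt (hdeg n hn)))) (pow_pos hK _))
    (by
      filter_upwards [hlarge, eventually_ge_atTop 2] with n hn hn2
      rwa [inv_le_iff_one_le_mul₀ (pow_pos hK 2), mul_assoc, hsplit hn2])
  refine ⟨c, hc, fun n hn z hz ↦ ?_⟩
  calc c * (‖z‖ - r) ^ 2
      ≤ ‖(p n).leadingCoeff‖ * K ^ ((p n).natDegree - 2) * (‖z‖ - r) ^ 2 := by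
        gcongr
        exact hcle n hn
    _ ≤ ‖(p n).leadingCoeff‖ * (‖z‖ - r) ^ ((p n).natDegree - 2) * (‖z‖ - r) ^ 2 := by
        gcongr
        linarith
    _ = ‖(p n).leadingCoeff‖ * (‖z‖ - r) ^ (p n).natDegree := by rw [mul_assoc, hsplit hn]
    _ ≤ ‖(p n).eval z‖ := norm_leadingCoeff_mul_pow_le_norm_eval (hroots n hn) (by linarith)

theorem guided_preimage_disk_general
    (p : ℕ → Polynomial ℂ)
    (hdeg : ∀ n ≥ 2, 2 ≤ (p n).natDegree)
    (α : ℝ)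
    (hα : α = Filter.limsup (fun n => (1 : ℝ) / ((p n).natDegree : ℝ)) Filter.atTop)
    (r : ℝ)
    (h : ℂ → ℝ)
    (hh : Filter.Tendsto (fun z : ℂ => h z - α * Real.log ‖z‖)
      (Filter.comap (fun z : ℂ => ‖z‖) Filter.atTop) Filter.atTop)
    (hzeros : ∀ n ≥ 1, ∀ z : ℂ, (p n).eval z = 0 → ‖z‖ ≤ r)
    (hgrow : ∀ z : ℂ, r < ‖z‖ →
      ∃ U ∈ nhds z, ∃ N : ℕ, 1 < N ∧ ∀ n ≥ N, ∀ ζ ∈ U,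
        h ζ < (1 / ((p n).natDegree : ℝ)) * max 0 (Real.log ‖(p n).eval ζ‖)) :
    ∃ ϱ : ℝ, 0 < ϱ ∧ ∀ R ≥ ϱ, ∀ n ≥ 2,
      (fun z : ℂ => (p n).eval z) ⁻¹' {z : ℂ | ‖z‖ ≤ R} ⊆ {z : ℂ | ‖z‖ ≤ R} := by
  have hroots : ∀ n ≥ 2, ∀ a, (p n).IsRoot a → ‖a‖ ≤ r := fun n hn ↦ hzeros n (by omega)
  have hα0 : 0 ≤ α := hα ▸ limsup_nonneg_of_nonneg fun n ↦ by positivity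
  have : (comap (fun z : ℂ ↦ ‖z‖) atTop).NeBot := by rw [comap_norm_atTop]; infer_instance
  obtain ⟨z₀, hz₀, hrz₀⟩ := ((eventually_nonneg_of_tendsto_sub_mul_log hα0 hh).and
    (tendsto_comap.eventually_gt_atTop |r|)).exists
  obtain ⟨U, hU, N, -, hN⟩ := hgrow z₀ ((le_abs_self r).trans_lt hrz₀)
  have hlarge : ∀ᶠ n in atTop, 1 ≤ ‖(p n).leadingCoeff‖ * (‖z₀‖ + r) ^ (p n).natDegree := by
    filter_upwards [eventually_ge_atTop N, eventually_ge_atTop 2] with n hnN hn2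
    exact (one_lt_of_nonneg_lt_mul_max_zero_log hz₀ (hN n hnN z₀ (mem_of_mem_nhds hU))
      (norm_nonneg _)).le.trans (norm_eval_le_norm_leadingCoeff_mul_pow (hroots n hn2) z₀)
  obtain ⟨c, hc, hbound⟩ :=
    exists_pos_mul_sq_le_norm_eval (by linarith [neg_abs_le r]) hdeg hroots hlarge
  refine ⟨max (‖z₀‖ + r + r) (max (2 * r) (4 / c)),
    lt_max_of_lt_right (lt_max_of_lt_right (by positivity)), fun R hR n hn z hz ↦ ?_⟩
  replace hz : ‖(p n).eval z‖ ≤ R := hz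
  show ‖z‖ ≤ R
  by_contra! hzR
  simp only [max_le_iff] at hR
  have hquad := le_mul_sub_sq hc (r := r) (x := ‖z‖) (by linarith) (by linarith)
  have hlower := hbound n hn z (by linarith)
  linarith

theorem guided_preimage_disk
    (p : ℕ → Polynomial ℂ)
    (hdeg1 : 1 ≤ (p 1).natDegree)
    (hdeg : ∀ n ≥ 2, 2 ≤ (p n).natDegree)
    (α : ℝ)
    (hα : α = Filter.limsup (fun n => (1 : ℝ) / ((p n).natDegree : ℝ)) Filter.atTop)
    (r : ℝ) (hr : 0 < r)
    (h : ℂ → ℝ)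
    (hh : Filter.Tendsto (fun z : ℂ => h z - α * Real.log ‖z‖)
      (Filter.comap (fun z : ℂ => ‖z‖) Filter.atTop) Filter.atTop)
    (hzeros : ∀ n ≥ 1, ∀ z : ℂ, (p n).eval z = 0 → ‖z‖ ≤ r)
    (hgrow : ∀ z : ℂ, r < ‖z‖ →
      ∃ U ∈ nhds z, ∃ N : ℕ, 1 < N ∧ ∀ n ≥ N, ∀ ζ ∈ U,
        h ζ < (1 / ((p n).natDegree : ℝ)) * max 0 (Real.log ‖(p n).eval ζ‖)) :
    ∃ ϱ : ℝ, 0 < ϱ ∧ ∀ R ≥ ϱ, ∀ n ≥ 2,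
      (fun z : ℂ => (p n).eval z) ⁻¹' {z : ℂ | ‖z‖ ≤ R} ⊆ {z : ℂ | ‖z‖ ≤ R} :=
  guided_preimage_disk_general p hdeg α hα r h hh hzeros hgrow
end

section
/- Let (p_n)_{n≥1} be a sequence of polynomials over ℂ with deg p_1 ≥ 1 and deg p_n ≥ 2 for all n ≥ 2, and set α := limsup_{n→∞} 1/(deg p_n). The following conditions are equivalent: (i) (p_n) is guided, i.e. there exist r > 0 and h : ℂ → ℝ with h(z) − α·log|z| → ∞ as |z| → ∞ such that every zero of every p_n lies in the closed disk of radius r centered at 0, and there exists N > 1 such that for all n ≥ N and all ζ with |ζ| > r, (1/deg p_n)·log⁺|p_n(ζ)| > h(ζ); (ii) there exist r > 0 and h : ℂ → ℝ with h(z) − α·log|z| → ∞ as |z| → ∞ such that every zero of every p_n lies in the closed disk of radius r centered at 0, and for every z with |z| > r there exist a neighbourhood U of z and an integer N > 1 with (1/deg p_n)·log⁺|p_n(ζ)| > h(ζ) for all n ≥ N and all ζ ∈ U; (iii) there exists R > 1 such that for every n ≥ 2, p_n⁻¹({z : |z| ≤ R}) ⊆ {z : |z| ≤ R}. -/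
/-!
Everything rests on the factorisation `‖q z‖ = ‖lc q‖ * ∏ ‖z - a‖` over the roots: if they all
lie in the disk of radius `r`, then `‖q w‖ * (‖z‖ - r) ^ d ≤ ‖q z‖ * (‖w‖ + r) ^ d`, so a single
point `w` with `‖q w‖ ≥ 1` controls the growth of `q` outside the disk uniformly in `d = deg q`.

(iii) ⇒ (i): invariance puts the roots of `p n` in the disk of radius `R` and forces
`‖p n w‖ > R` once `‖w‖ > R`; this gives `h z = log ((‖z‖ - R) / (‖w‖ + R))`, and
`h z - α log ‖z‖ → ∞` because `α ≤ 1/2 < 1`.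

(ii) ⇒ (iii): as `α ≥ 0`, `h ≥ 0` at some `w` far out, so local domination at `w` gives
`‖p n w‖ > 1` for large `n`, hence `‖z‖ ≤ ‖p n z‖` for `‖z‖ ≥ 4 (‖w‖ + r) ^ 2` uniformly in `n`;
the finitely many remaining `p n` escape to infinity individually.
-/

open Filter Polynomial

instance Filter.comap_norm_atTop_neBot {K : Type*} [NontriviallyNormedField K] :
    (comap (‖·‖) atTop : Filter K).NeBot := by
  rw [comap_norm_atTop]; infer_instance

namespace Polynomial

variable {K : Type*} [NormedField K] {q : K[X]}

theorem exists_forall_mem_roots_norm_le (q : K[X]) : ∃ r, 0 ≤ r ∧ ∀ a ∈ q.roots, ‖a‖ ≤ r := by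
  classical
  exact ⟨∑ a ∈ q.roots.toFinset, ‖a‖, Finset.sum_nonneg fun _ _ => norm_nonneg _, fun _ ha =>
    Finset.single_le_sum (f := (‖·‖)) (fun _ _ => norm_nonneg _) (Multiset.mem_toFinset.2 ha)⟩

theorem Splits.norm_eval_eq (hq : q.Splits) (x : K) :
    ‖q.eval x‖ = ‖q.leadingCoeff‖ * (q.roots.map fun a => ‖x - a‖).prod := by
  rw [hq.eval_eq_prod_roots, norm_mul]
  exact congrArg _
    ((map_multiset_prod (normHom : K →*₀ ℝ) _).trans (by rw [Multiset.map_map]; rfl))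

theorem Splits.norm_eval_mul_sub_pow_le (hq : q.Splits) {r : ℝ} (hr : ∀ a ∈ q.roots, ‖a‖ ≤ r)
    {z : K} (hz : r ≤ ‖z‖) (w : K) :
    ‖q.eval w‖ * (‖z‖ - r) ^ q.natDegree ≤ ‖q.eval z‖ * (‖w‖ + r) ^ q.natDegree := by
  simp only [hq.norm_eval_eq, hq.natDegree_eq_card_roots, mul_assoc, ← Multiset.prod_replicate,
    ← Multiset.map_const', ← Multiset.prod_map_mul]
  refine mul_le_mul_of_nonneg_left (Multiset.prod_map_le_prod_map₀ _ _
    (fun a _ => by have := norm_nonneg (w - a); nlinarith) fun a ha => ?_) (norm_nonneg _)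
  have hw : ‖w - a‖ ≤ ‖w‖ + r := (norm_sub_le w a).trans (by linarith [hr a ha])
  have hz' : ‖z‖ - r ≤ ‖z - a‖ := by linarith [norm_sub_norm_le z a, hr a ha]
  rw [mul_comm ‖z - a‖]
  exact mul_le_mul hw hz' (by linarith) ((norm_nonneg _).trans hw)

theorem Splits.norm_le_norm_eval (hq : q.Splits) (hd : 2 ≤ q.natDegree) {r : ℝ} (hr0 : 0 ≤ r)
    (hr : ∀ a ∈ q.roots, ‖a‖ ≤ r) {w : K} (hw : 1 ≤ ‖w‖) (hqw : 1 ≤ ‖q.eval w‖) {z : K}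
    (hz : 4 * (‖w‖ + r) ^ 2 ≤ ‖z‖) : ‖z‖ ≤ ‖q.eval z‖ := by
  set c := ‖w‖ + r
  set t := ‖z‖
  have hc : 1 ≤ c := by linarith
  have hrt : r + c ≤ t := by nlinarith
  have hx : 1 ≤ (t - r) / c := by rw [le_div_iff₀ (by linarith)]; linarith
  calc t ≤ ((t - r) / c) ^ 2 := by
        rw [div_pow, le_div_iff₀ (by positivity)]; nlinarith
    _ ≤ ((t - r) / c) ^ q.natDegree := pow_le_pow_right₀ hx hd
    _ ≤ ‖q.eval w‖ * ((t - r) / c) ^ q.natDegree := le_mul_of_one_le_left (by positivity) hqw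
    _ ≤ ‖q.eval z‖ := by
        rw [div_pow, mul_div_assoc', div_le_iff₀ (by positivity)]
        exact hq.norm_eval_mul_sub_pow_le hr (by linarith) w

theorem Splits.log_div_lt_mul_max_log (hq : q.Splits) (hd : 0 < q.natDegree) {r : ℝ}
    (hr0 : 0 < r) (hr : ∀ a ∈ q.roots, ‖a‖ ≤ r) {w : K} (hqw : 1 < ‖q.eval w‖) {z : K}
    (hz : r < ‖z‖) :
    Real.log ((‖z‖ - r) / (‖w‖ + r)) < 1 / q.natDegree * max 0 (Real.log ‖q.eval z‖) := by
  set x := (‖z‖ - r) / (‖w‖ + r)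
  have hx : 0 < x := div_pos (by linarith) (by positivity)
  have hd' : (0 : ℝ) < q.natDegree := by exact_mod_cast hd
  have hpow : x ^ q.natDegree < ‖q.eval z‖ := calc
    x ^ q.natDegree < ‖q.eval w‖ * x ^ q.natDegree := lt_mul_of_one_lt_left (by positivity) hqw
    _ ≤ ‖q.eval z‖ := by
        rw [div_pow, mul_div_assoc', div_le_iff₀ (by positivity)]
        exact hq.norm_eval_mul_sub_pow_le hr hz.le w
  have hlog : q.natDegree * Real.log x < Real.log ‖q.eval z‖ := by
    rw [← Real.log_pow]; exact Real.log_lt_log (by positivity) hpow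
  calc Real.log x = 1 / q.natDegree * (q.natDegree * Real.log x) := by field_simp
    _ < 1 / q.natDegree * Real.log ‖q.eval z‖ := by gcongr
    _ ≤ 1 / q.natDegree * max 0 (Real.log ‖q.eval z‖) := by gcongr; exact le_max_right _ _

theorem eventually_norm_le_norm_eval {K : Type*} [NontriviallyNormedField K] {q : K[X]}
    (hq : q.Splits) (hd : 2 ≤ q.natDegree) :
    ∀ᶠ z in comap (‖·‖) atTop, ‖z‖ ≤ ‖q.eval z‖ := by
  obtain ⟨r, hr0, hr⟩ := exists_forall_mem_roots_norm_le q
  have hdeg : 0 < q.degree := natDegree_pos_iff_degree_pos.1 (by omega)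
  have hgrowth := q.tendsto_norm_atTop hdeg (z := fun x => x) (tendsto_comap (f := (‖·‖)))
  obtain ⟨w, hqw, hw⟩ :=
    ((hgrowth.eventually_ge_atTop 1).and (tendsto_comap.eventually_ge_atTop 1)).exists
  filter_upwards [tendsto_comap.eventually_ge_atTop (4 * (‖w‖ + r) ^ 2)] with z hz
  exact hq.norm_le_norm_eval hd hr0 hr hw hqw hz

end Polynomial

theorem Real.tendsto_log_div_sub_mul_log_atTop {α : ℝ} (hα : α < 1) (a : ℝ) {b : ℝ}
    (hb : 0 < b) : Tendsto (fun t => Real.log ((t - a) / b) - α * Real.log t) atTop atTop := by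
  refine tendsto_atTop_mono' _ ?_ (tendsto_atTop_add_const_right _ (-Real.log (2 * b))
    (Real.tendsto_log_atTop.const_mul_atTop (sub_pos.2 hα)))
  filter_upwards [eventually_ge_atTop (2 * a), eventually_gt_atTop 0] with t hta ht
  have : Real.log (t / (2 * b)) ≤ Real.log ((t - a) / b) :=
    Real.log_le_log (by positivity) (by rw [div_le_div_iff₀ (by positivity) hb]; nlinarith)
  rw [Real.log_div ht.ne' (by positivity)] at this
  linarith

theorem one_lt_of_lt_mul_max_zero_log {a c y : ℝ} (ha : 0 ≤ a) (hy : 0 ≤ y)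
    (h : a < c * max 0 (Real.log y)) : 1 < y := by
  by_contra! hy1
  rw [max_eq_left (Real.log_nonpos hy hy1), mul_zero] at h
  linarith

theorem limsup_one_div_natCast_mem_Icc {d : ℕ → ℕ} (hd : ∀ᶠ n in atTop, 2 ≤ d n) :
    limsup (fun n => 1 / (d n : ℝ)) atTop ∈ Set.Icc 0 (1 / 2) := by
  have hnonneg : ∀ n, 0 ≤ 1 / (d n : ℝ) := fun n => by positivity
  have hle : ∀ n, 1 / (d n : ℝ) ≤ 1 := fun n => by
    rcases (d n).eq_zero_or_pos with h | h
    · simp [h]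
    · exact div_le_one_of_le₀ (by exact_mod_cast h) (by positivity)
  refine ⟨le_limsup_of_frequently_le (.of_forall hnonneg) (isBoundedUnder_of ⟨1, hle⟩),
    limsup_le_of_le (isBoundedUnder_of ⟨0, hnonneg⟩).isCoboundedUnder_le ?_⟩
  filter_upwards [hd] with n hn
  rw [div_le_div_iff₀ (by positivity) (by norm_num)]
  exact_mod_cast (by omega : 1 * 2 ≤ 1 * d n)

theorem exists_preimage_subset_of_eventually_norm_le {E : Type*} [SeminormedAddGroup E]
    {f : ℕ → E → E} {m : ℕ} (h : ∀ᶠ z in comap (‖·‖) atTop, ∀ n ≥ m, ‖z‖ ≤ ‖f n z‖) :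
    ∃ R : ℝ, 1 < R ∧ ∀ n ≥ m, f n ⁻¹' {z | ‖z‖ ≤ R} ⊆ {z | ‖z‖ ≤ R} := by
  obtain ⟨C, hC⟩ := eventually_atTop.1 (eventually_comap.1 h)
  refine ⟨max C 2, by linarith [le_max_right C 2], fun n hn z hz => ?_⟩
  simp only [Set.mem_preimage, Set.mem_ofPred_eq] at hz ⊢
  by_contra! hzR
  linarith [hC ‖z‖ ((le_max_left _ _).trans hzR.le) z rfl n hn]

section Sequence

variable {K : Type*} [NontriviallyNormedField K] [IsAlgClosed K] {p : ℕ → K[X]}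

theorem exists_preimage_subset_of_eventually_one_le_norm_eval
    (hdeg : ∀ n ≥ 2, 2 ≤ (p n).natDegree) {r : ℝ} (hr0 : 0 ≤ r)
    (hroots : ∀ n ≥ 2, ∀ a ∈ (p n).roots, ‖a‖ ≤ r) {w : K} (hw : 1 ≤ ‖w‖) {N : ℕ}
    (hN : ∀ n ≥ N, 1 ≤ ‖(p n).eval w‖) :
    ∃ R : ℝ, 1 < R ∧ ∀ n ≥ 2,
      (fun z => (p n).eval z) ⁻¹' {z | ‖z‖ ≤ R} ⊆ {z | ‖z‖ ≤ R} := by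
  have huniform : ∀ᶠ z in comap (‖·‖) atTop, ∀ n ≥ max N 2, ‖z‖ ≤ ‖(p n).eval z‖ := by
    filter_upwards [tendsto_comap.eventually_ge_atTop (4 * (‖w‖ + r) ^ 2)] with z hz n hn
    exact (IsAlgClosed.splits _).norm_le_norm_eval (hdeg n (le_of_max_le_right hn)) hr0
      (hroots n (le_of_max_le_right hn)) hw (hN n (le_of_max_le_left hn)) hz
  have hfinite : ∀ᶠ z in comap (‖·‖) atTop, ∀ n ∈ Finset.Ico 2 N, ‖z‖ ≤ ‖(p n).eval z‖ :=
    (eventually_all_finset _).2 fun n hn =>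
      eventually_norm_le_norm_eval (IsAlgClosed.splits _) (hdeg n (Finset.mem_Ico.1 hn).1)
  refine exists_preimage_subset_of_eventually_norm_le ?_
  filter_upwards [huniform, hfinite] with z hlarge hsmall n hn
  by_cases hnN : n < N
  · exact hsmall n (Finset.mem_Ico.2 ⟨hn, hnN⟩)
  · exact hlarge n (max_le (not_lt.1 hnN) hn)

theorem exists_guided_of_preimage_subset (hp1 : p 1 ≠ 0) (hdeg : ∀ n ≥ 2, 2 ≤ (p n).natDegree)
    {α : ℝ} (hα : α < 1) {R : ℝ} (hR : 1 < R)
    (hinv : ∀ n ≥ 2, (fun z => (p n).eval z) ⁻¹' {z | ‖z‖ ≤ R} ⊆ {z | ‖z‖ ≤ R}) :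
    ∃ r : ℝ, 0 < r ∧ ∃ h : K → ℝ,
      Tendsto (fun z => h z - α * Real.log ‖z‖) (comap (‖·‖) atTop) atTop ∧
      (∀ n ≥ 1, ∀ z, (p n).eval z = 0 → ‖z‖ ≤ r) ∧
      (∃ N : ℕ, 1 < N ∧ ∀ n ≥ N, ∀ ζ, r < ‖ζ‖ →
        h ζ < 1 / ((p n).natDegree : ℝ) * max 0 (Real.log ‖(p n).eval ζ‖)) := by
  have hrootsR : ∀ n ≥ 2, ∀ a ∈ (p n).roots, ‖a‖ ≤ R := fun n hn a ha =>
    hinv n hn <| show ‖(p n).eval a‖ ≤ R by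
      rw [(isRoot_of_mem_roots ha).eq_zero, norm_zero]; linarith
  obtain ⟨w, hw⟩ := NormedField.exists_lt_norm K R
  have hpw : ∀ n ≥ 2, 1 < ‖(p n).eval w‖ := fun n hn =>
    hR.trans (lt_of_not_ge fun hle => (hinv n hn hle).not_gt hw)
  obtain ⟨r₁, -, hr₁⟩ := exists_forall_mem_roots_norm_le (p 1)
  refine ⟨max r₁ R, by positivity, fun z => Real.log ((‖z‖ - R) / (‖w‖ + R)),
    (Real.tendsto_log_div_sub_mul_log_atTop hα R (by positivity)).comp tendsto_comap,
    fun n hn z hz => ?_, 2, one_lt_two, fun n hn ζ hζ => ?_⟩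
  · rcases hn.eq_or_lt with rfl | hn
    · exact (hr₁ z ((mem_roots hp1).2 hz)).trans (le_max_left _ _)
    · have hpn : p n ≠ 0 := fun h0 => by simpa [h0] using hdeg n hn
      exact (hrootsR n hn z ((mem_roots hpn).2 hz)).trans (le_max_right _ _)
  · exact (IsAlgClosed.splits _).log_div_lt_mul_max_log (by linarith [hdeg n hn]) (by positivity)
      (hrootsR n hn) (hpw n hn) ((le_max_right _ _).trans_lt hζ)

end Sequence

theorem guided_sequence_characterization
    (p : ℕ → Polynomial ℂ)
    (hdeg1 : 1 ≤ (p 1).natDegree)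
    (hdeg : ∀ n ≥ 2, 2 ≤ (p n).natDegree)
    (α : ℝ)
    (hα : α = Filter.limsup (fun n => (1 : ℝ) / ((p n).natDegree : ℝ)) Filter.atTop) :
    List.TFAE
      [ -- (i) (p_n) is guided
        (∃ r : ℝ, 0 < r ∧ ∃ h : ℂ → ℝ,
          Filter.Tendsto (fun z : ℂ => h z - α * Real.log (‖z‖))
            (Filter.comap (fun z : ℂ => ‖z‖) Filter.atTop) Filter.atTop ∧
          (∀ n ≥ 1, ∀ z : ℂ, (p n).eval z = 0 → ‖z‖ ≤ r) ∧
          (∃ N : ℕ, 1 < N ∧ ∀ n ≥ N, ∀ ζ : ℂ, r < ‖ζ‖ →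
            h ζ < (1 / ((p n).natDegree : ℝ)) *
              max 0 (Real.log (‖(p n).eval ζ‖)))),
        -- (ii) assumptions of the key lemma
        (∃ r : ℝ, 0 < r ∧ ∃ h : ℂ → ℝ,
          Filter.Tendsto (fun z : ℂ => h z - α * Real.log (‖z‖))
            (Filter.comap (fun z : ℂ => ‖z‖) Filter.atTop) Filter.atTop ∧
          (∀ n ≥ 1, ∀ z : ℂ, (p n).eval z = 0 → ‖z‖ ≤ r) ∧
          (∀ z : ℂ, r < ‖z‖ →
            ∃ U ∈ nhds z, ∃ N : ℕ, 1 < N ∧ ∀ n ≥ N, ∀ ζ ∈ U,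
              h ζ < (1 / ((p n).natDegree : ℝ)) *
                max 0 (Real.log (‖(p n).eval ζ‖)))),
        -- (iii) invariance of a large disk
        (∃ R : ℝ, 1 < R ∧ ∀ n ≥ 2,
          (fun z : ℂ => (p n).eval z) ⁻¹' {z : ℂ | ‖z‖ ≤ R}
            ⊆ {z : ℂ | ‖z‖ ≤ R}) ] := by
  obtain ⟨hα0, hα2⟩ : α ∈ Set.Icc 0 (1 / 2) :=
    hα ▸ limsup_one_div_natCast_mem_Icc (eventually_atTop.2 ⟨2, hdeg⟩)
  tfae_have 1 → 2
  | ⟨r, hr, h, hten, hroots, N, hN, hdom⟩ => ⟨r, hr, h, hten, hroots, fun _ hz =>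
      ⟨{ζ | r < ‖ζ‖}, (isOpen_lt continuous_const continuous_norm).mem_nhds hz, N, hN,
        fun n hn ζ hζ => hdom n hn ζ hζ⟩⟩
  tfae_have 2 → 3 := by
    rintro ⟨r, hr, h, hten, hroots, hloc⟩
    obtain ⟨w, hwr, hw1, hhw⟩ := ((tendsto_comap.eventually_gt_atTop r).and
      ((tendsto_comap.eventually_ge_atTop 1).and (hten.eventually_ge_atTop 0))).exists
    obtain ⟨U, hU, N, -, hdom⟩ := hloc w hwr
    have hhw0 : 0 ≤ h w := by nlinarith [Real.log_nonneg hw1]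
    exact exists_preimage_subset_of_eventually_one_le_norm_eval hdeg hr.le
      (fun n hn a ha => hroots n (by omega) a (isRoot_of_mem_roots ha)) hw1 fun n hn =>
        (one_lt_of_lt_mul_max_zero_log hhw0 (norm_nonneg _) (hdom n hn w (mem_of_mem_nhds hU))).le
  tfae_have 3 → 1
  | ⟨R, hR, hinv⟩ => exists_guided_of_preimage_subset (fun h0 => by simp [h0] at hdeg1) hdeg
      (by linarith) hR hinv
  tfae_finish
end

section
/- Let (d_n)_{n≥1} be a sequence of positive integers with d_1 ≥ 1 and d_n ≥ 2 for all n ≥ 2, and let T_{d_n} denote the d_n-th Chebyshev polynomial of the first kind regarded as a polynomial over ℂ. Then the non-autonomous filled Julia set K[(T_{d_n})] := {z ∈ ℂ : the sequence ((T_{d_n} ∘ ⋯ ∘ T_{d_1})(z))_{n≥1} is bounded} equals the real segment [−1,1] embedded in ℂ, i.e. {z ∈ ℂ : Im z = 0 and −1 ≤ Re z ≤ 1}. -/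
/-!
Every `z ∈ ℂ` is `cos θ` for some `θ`, and `T_m (cos θ) = cos (m θ)`, so the `n`-th iterate at
`z` is `cos (D_n θ)` with `D_n = d_1 ⋯ d_n ≥ n`. For real `θ` this stays in `[-1, 1]`. Otherwise
`‖cos w‖ ≥ sinh |Im w|` gives `‖cos (D_n θ)‖ ≥ D_n |Im θ| → ∞`.
-/

/-- Evaluation of the composition `p_n ∘ ⋯ ∘ p_1` at a point (`p_1` applied first);
for `n = 0` it is the identity. -/
noncomputable def compEval (p : ℕ → Polynomial ℂ) : ℕ → ℂ → ℂ
  | 0, z => z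
  | n + 1, z => (p (n + 1)).eval (compEval p n z)

open Complex Polynomial Finset

theorem compEval_chebyshev_T_cos (d : ℕ → ℤ) (θ : ℂ) (n : ℕ) :
    compEval (fun k => Chebyshev.T ℂ (d k)) n (cos θ) = cos ((∏ k ∈ Icc 1 n, d k : ℤ) * θ) := by
  induction n with
  | zero => simp [compEval]
  | succ n ih =>
    rw [compEval, ih, Chebyshev.T_complex_cos, prod_Icc_succ_top (by omega)]
    push_cast
    ring_nf

theorem le_prod_Icc_of_two_le (d : ℕ → ℕ) (hd1 : 1 ≤ d 1) (hd : ∀ n ≥ 2, 2 ≤ d n) (n : ℕ) :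
    n ≤ ∏ k ∈ Icc 1 n, d k := by
  induction n with
  | zero => simp
  | succ n ih =>
    rw [prod_Icc_succ_top (by omega)]
    rcases Nat.eq_zero_or_pos n with rfl | hn
    · simpa using hd1
    · nlinarith [hd (n + 1) (by omega)]

/-- Reverse triangle inequality in `2 cos w = exp (w I) + exp (-w I)`. -/
theorem sinh_abs_im_le_norm_cos (w : ℂ) : Real.sinh |w.im| ≤ ‖cos w‖ := by
  have h := abs_norm_sub_norm_le (exp (-w * I)) (-exp (w * I))
  rw [norm_neg, sub_neg_eq_add, add_comm, ← two_cos, norm_mul, Complex.norm_exp,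
    Complex.norm_exp] at h
  simp only [neg_mul, neg_re, mul_re, I_re, mul_zero, I_im, mul_one, zero_sub, neg_neg,
    Complex.norm_ofNat] at h
  rw [← Real.abs_sinh, Real.sinh_eq, abs_div, abs_two]
  linarith

theorem exists_lt_norm_cos_int_mul {θ : ℂ} (hθ : θ.im ≠ 0) (M : ℝ) :
    ∃ N : ℕ, ∀ D : ℤ, N ≤ |D| → M < ‖cos (D * θ)‖ := by
  obtain ⟨N, hN⟩ := exists_nat_gt (M / |θ.im|)
  refine ⟨N, fun D hD => ?_⟩
  have hD' : (N : ℝ) ≤ |(D : ℝ)| := by exact_mod_cast hD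
  calc M < N * |θ.im| := (div_lt_iff₀ (abs_pos.mpr hθ)).mp hN
    _ ≤ |(D : ℝ)| * |θ.im| := by gcongr
    _ ≤ Real.sinh |(D * θ).im| := by
        rw [show (D * θ).im = D * θ.im by simp, abs_mul]
        exact Real.self_le_sinh_iff.mpr (by positivity)
    _ ≤ ‖cos (D * θ)‖ := sinh_abs_im_le_norm_cos _

theorem mem_segment_iff_exists_cos_ofReal (z : ℂ) :
    (z.im = 0 ∧ -1 ≤ z.re ∧ z.re ≤ 1) ↔ ∃ x : ℝ, cos x = z := by
  constructor
  · rintro ⟨him, hle, hge⟩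
    refine ⟨Real.arccos z.re, ?_⟩
    rw [← ofReal_cos, Real.cos_arccos hle hge]
    exact Complex.ext rfl him.symm
  · rintro ⟨x, rfl⟩
    rw [cos_ofReal_re, cos_ofReal_im]
    exact ⟨rfl, Real.neg_one_le_cos x, Real.cos_le_one x⟩

theorem julia_of_chebyshev_eq_segment
    (d : ℕ → ℕ) (hd1 : 1 ≤ d 1) (hd : ∀ n ≥ 2, 2 ≤ d n) :
    {z : ℂ | ∃ M : ℝ, ∀ n ≥ 1,
        ‖compEval (fun k => Polynomial.Chebyshev.T ℂ ((d k : ℤ))) n z‖ ≤ M}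
      = {z : ℂ | z.im = 0 ∧ -1 ≤ z.re ∧ z.re ≤ 1} := by
  ext z
  simp only [Set.mem_ofPred_eq, mem_segment_iff_exists_cos_ofReal]
  constructor
  · rintro ⟨M, hM⟩
    obtain ⟨θ, rfl⟩ := cos_surjective z
    have hθ : θ.im = 0 := by
      by_contra hθ
      obtain ⟨N, hN⟩ := exists_lt_norm_cos_int_mul hθ M
      have hD : (N : ℤ) ≤ |∏ k ∈ Icc 1 (N + 1), (d k : ℤ)| := by
        rw [abs_of_nonneg (by positivity)]
        exact_mod_cast N.le_succ.trans (le_prod_Icc_of_two_le d hd1 hd _)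
      have hlt := hN _ hD
      rw [← compEval_chebyshev_T_cos] at hlt
      exact (hM (N + 1) (by omega)).not_gt hlt
    exact ⟨θ.re, congrArg cos (Complex.ext (by simp) (by simp [hθ]))⟩
  · rintro ⟨x, rfl⟩
    refine ⟨1, fun n _ => ?_⟩
    rw [compEval_chebyshev_T_cos, ← ofReal_intCast, ← ofReal_mul, ← ofReal_cos, norm_real,
      Real.norm_eq_abs]
    exact Real.abs_cos_le_one _
end

section
/- Let P be a non-constant polynomial over ℂ, and define the sequence p_1 := P and p_n := T_n (the n-th Chebyshev polynomial of the first kind over ℂ) for n ≥ 2. Then the non-autonomous filled Julia set K[(p_n)] := {z ∈ ℂ : the sequence ((p_n ∘ ⋯ ∘ p_1)(z))_{n≥1} is bounded} equals P⁻¹([−1,1]), the preimage under P of the real segment {w ∈ ℂ : Im w = 0 and −1 ≤ Re w ≤ 1}. -/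
open Polynomial Polynomial.Chebyshev

namespace Complex

theorem sq_norm_cos (z : ℂ) : ‖cos z‖ ^ 2 = Real.cos z.re ^ 2 + Real.sinh z.im ^ 2 := by
  have hre : (cos z).re = Real.cos z.re * Real.cosh z.im := by
    rw [cos_eq]; simp [cos_ofReal_re, cosh_ofReal_re]
  have him : (cos z).im = -(Real.sin z.re * Real.sinh z.im) := by
    rw [cos_eq]; simp [sin_ofReal_re, sinh_ofReal_re]
  rw [Complex.sq_norm, normSq_apply, hre, him]
  linear_combination Real.cos z.re ^ 2 * Real.cosh_sq z.im +
    Real.sinh z.im ^ 2 * Real.sin_sq_add_cos_sq z.re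

theorem abs_sinh_im_le_norm_cos (z : ℂ) : |Real.sinh z.im| ≤ ‖cos z‖ := by
  have h : Real.sinh z.im ^ 2 ≤ ‖cos z‖ ^ 2 := by
    rw [sq_norm_cos]; exact le_add_of_nonneg_left (sq_nonneg _)
  simpa only [abs_norm] using sq_le_sq.mp h

theorem exists_real_cos_eq_iff (w : ℂ) :
    (∃ θ : ℝ, (Real.cos θ : ℂ) = w) ↔ w.im = 0 ∧ -1 ≤ w.re ∧ w.re ≤ 1 := by
  constructor
  · rintro ⟨θ, rfl⟩
    exact ⟨ofReal_im _, by rw [ofReal_re]; exact Real.neg_one_le_cos θ,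
      by rw [ofReal_re]; exact Real.cos_le_one θ⟩
  · rintro ⟨him, hneg, hle⟩
    exact ⟨Real.arccos w.re, by rw [Real.cos_arccos hneg hle]; exact ext rfl him.symm⟩

end Complex

namespace Polynomial.Chebyshev

theorem norm_T_complex_real_cos_le_one (n : ℤ) (θ : ℝ) : ‖(T ℂ n).eval (Real.cos θ : ℂ)‖ ≤ 1 := by
  rw [Complex.ofReal_cos, T_complex_cos, ← Complex.ofReal_intCast, ← Complex.ofReal_mul,
    ← Complex.ofReal_cos, Complex.norm_real, Real.norm_eq_abs]
  exact Real.abs_cos_le_one _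

theorem abs_mul_abs_im_le_norm_T_complex_cos (n : ℤ) (ζ : ℂ) :
    |(n : ℝ)| * |ζ.im| ≤ ‖(T ℂ n).eval (Complex.cos ζ)‖ := by
  rw [T_complex_cos, ← abs_mul]
  calc |(n : ℝ) * ζ.im| ≤ |Real.sinh ((n : ℝ) * ζ.im)| := by
        rw [Real.abs_sinh]; exact Real.self_le_sinh_iff.mpr (abs_nonneg _)
    _ = |Real.sinh (n * ζ).im| := by simp
    _ ≤ ‖Complex.cos (n * ζ)‖ := Complex.abs_sinh_im_le_norm_cos _

theorem im_eq_zero_of_frequently_norm_T_complex_cos_le {ζ : ℂ} {M : ℝ}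
    (h : ∀ N : ℕ, ∃ n : ℤ, N ≤ |n| ∧ ‖(T ℂ n).eval (Complex.cos ζ)‖ ≤ M) : ζ.im = 0 := by
  by_contra hζ
  obtain ⟨N, hN⟩ := exists_nat_gt (M / |ζ.im|)
  obtain ⟨n, hNn, hn⟩ := h N
  have hNn' : (N : ℝ) ≤ |(n : ℝ)| := by exact_mod_cast hNn
  have hlower := abs_mul_abs_im_le_norm_T_complex_cos n ζ
  rw [div_lt_iff₀ (abs_pos.mpr hζ)] at hN
  nlinarith [abs_nonneg ζ.im]

end Polynomial.Chebyshev

theorem compEval_succ_eq_T_factorial {p : ℕ → Polynomial ℂ}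
    (hp : ∀ n ≥ 2, p n = T ℂ (n : ℤ)) (z : ℂ) (n : ℕ) :
    compEval p (n + 1) z = (T ℂ ((n + 1).factorial : ℤ)).eval ((p 1).eval z) := by
  induction n with
  | zero => simp [compEval]
  | succ n ih =>
    rw [compEval, ih, hp (n + 2) (by omega), Nat.factorial_succ (n + 1), Nat.cast_mul, T_mul,
      eval_comp]

theorem julia_preimage_of_segment_general
    (P : Polynomial ℂ)
    (p : ℕ → Polynomial ℂ) (hp1 : p 1 = P)
    (hp : ∀ n ≥ 2, p n = Polynomial.Chebyshev.T ℂ (n : ℤ)) :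
    {z : ℂ | ∃ M : ℝ, ∀ n ≥ 1, ‖compEval p n z‖ ≤ M}
      = (fun z : ℂ => P.eval z) ⁻¹' {w : ℂ | w.im = 0 ∧ -1 ≤ w.re ∧ w.re ≤ 1} := by
  ext z
  simp only [Set.mem_ofPred_eq, Set.mem_preimage, ← Complex.exists_real_cos_eq_iff]
  constructor
  · rintro ⟨M, hM⟩
    obtain ⟨ζ, hζ⟩ := Complex.cos_surjective (P.eval z)
    have hζim : ζ.im = 0 := im_eq_zero_of_frequently_norm_T_complex_cos_le fun N =>
      ⟨(N + 1).factorial, by exact_mod_cast (Nat.self_le_factorial (N + 1)).trans' N.le_succ, by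
        rw [hζ, ← hp1, ← compEval_succ_eq_T_factorial hp]; exact hM _ N.succ_pos⟩
    refine ⟨ζ.re, ?_⟩
    rw [← hζ, Complex.ofReal_cos]
    exact congrArg _ (Complex.ext rfl hζim.symm)
  · rintro ⟨θ, hθ⟩
    refine ⟨1, fun n hn => ?_⟩
    obtain ⟨n, rfl⟩ := Nat.exists_eq_add_of_le' hn
    rw [compEval_succ_eq_T_factorial hp, hp1, ← hθ]
    exact norm_T_complex_real_cos_le_one _ _

theorem julia_preimage_of_segment
    (P : Polynomial ℂ) (hP : 1 ≤ P.natDegree)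
    (p : ℕ → Polynomial ℂ) (hp1 : p 1 = P)
    (hp : ∀ n ≥ 2, p n = Polynomial.Chebyshev.T ℂ (n : ℤ)) :
    {z : ℂ | ∃ M : ℝ, ∀ n ≥ 1, ‖compEval p n z‖ ≤ M}
      = (fun z : ℂ => P.eval z) ⁻¹' {w : ℂ | w.im = 0 ∧ -1 ≤ w.re ∧ w.re ≤ 1} :=
  julia_preimage_of_segment_general P p hp1 hp
end

section
/- Let p_n(z) := n^{2^n}·z² for every n ≥ 1. Then the non-autonomous filled Julia set K[(p_n)] := {z ∈ ℂ : the sequence ((p_n ∘ ⋯ ∘ p_1)(z))_{n≥1} is bounded} equals {0}. -/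
/-!
The iterates have the closed form `(p_n ∘ ⋯ ∘ p_1)(z) = (n! z)^(2^n)`. For `z ≠ 0` the base
`n! |z|` eventually exceeds `1`, so the `2^n`-th power is at least the base, which tends to infinity.
-/

open Filter Polynomial
open scoped Nat

lemma compEval_C_mul_X_sq (a : ℕ → ℂ) (n : ℕ) (z : ℂ) :
    compEval (fun k => C (a k) * X ^ 2) (n + 1) z
      = a (n + 1) * compEval (fun k => C (a k) * X ^ 2) n z ^ 2 := by
  simp [compEval]

lemma compEval_eq_factorial_mul_pow (n : ℕ) (z : ℂ) :
    compEval (fun k => C ((k : ℂ) ^ (2 ^ k)) * X ^ 2) n z = (n ! * z) ^ (2 ^ n) := by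
  induction n with
  | zero => simp [compEval]
  | succ n ih =>
    rw [compEval_C_mul_X_sq, ih, ← pow_mul, ← pow_succ, ← mul_pow, Nat.factorial_succ,
      Nat.cast_mul, mul_assoc, Nat.cast_succ]

lemma tendsto_mul_factorial_pow_two_pow {c : ℝ} (hc : 0 < c) :
    Tendsto (fun n : ℕ => (n ! * c) ^ (2 ^ n)) atTop atTop := by
  have hbase : Tendsto (fun n : ℕ => (n ! : ℝ) * c) atTop atTop :=
    (tendsto_natCast_atTop_atTop.comp factorial_tendsto_atTop).atTop_mul_const hc
  refine tendsto_atTop_mono' _ ?_ hbase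
  filter_upwards [hbase.eventually_ge_atTop 1] with n hn
  exact le_self_pow₀ hn (pow_ne_zero n two_ne_zero)

theorem julia_singleton_zero :
    {z : ℂ | ∃ M : ℝ, ∀ n ≥ 1,
        ‖compEval (fun k => Polynomial.C ((k : ℂ) ^ (2 ^ k)) * Polynomial.X ^ 2) n z‖ ≤ M}
      = {0} := by
  ext z
  simp only [Set.mem_ofPred_eq, Set.mem_singleton_iff, compEval_eq_factorial_mul_pow]
  constructor
  · rintro ⟨M, hM⟩
    by_contra hz
    obtain ⟨n, hnM, hn⟩ := (((tendsto_mul_factorial_pow_two_pow (norm_pos_iff.2 hz)).eventually_gt_atTop M).and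
      (eventually_ge_atTop 1)).exists
    have hbound := hM n hn
    simp only [norm_pow, norm_mul, Complex.norm_natCast] at hbound
    linarith
  · rintro rfl
    exact ⟨0, fun n _ => by simp⟩
end

section
/- Let q_1(z) := z² − 1 and q_n(z) := n^{2^n}·z² for every n ≥ 2. Then the non-autonomous filled Julia set K[(q_n)] := {z ∈ ℂ : the sequence ((q_n ∘ ⋯ ∘ q_1)(z))_{n≥1} is bounded} equals {−1, 1}. -/
open Filter Polynomial

theorem compEval_succ_of_eq_C_mul_X_sq {p : ℕ → ℂ[X]} {n : ℕ} {a : ℂ}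
    (hp : p (n + 1) = C a * X ^ 2) (z : ℂ) :
    compEval p (n + 1) z = a * compEval p n z ^ 2 := by
  simp [compEval, hp]

theorem norm_compEval_eq_sqrt_mul_factorial_pow {q : ℕ → ℂ[X]}
    (hq1 : q 1 = X ^ 2 - 1) (hq : ∀ n ≥ 2, q n = C ((n : ℂ) ^ (2 ^ n)) * X ^ 2)
    (z : ℂ) {n : ℕ} (hn : 1 ≤ n) :
    ‖compEval q n z‖ = (√‖z ^ 2 - 1‖ * n.factorial) ^ 2 ^ n := by
  induction n, hn using Nat.le_induction with
  | base => simp [compEval, hq1, Real.sq_sqrt (norm_nonneg _)]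
  | succ n hn ih =>
    rw [compEval_succ_of_eq_C_mul_X_sq (hq (n + 1) (by omega)), norm_mul, norm_pow, norm_pow,
      ih, Complex.norm_natCast, ← pow_mul, ← pow_succ, ← mul_pow, Nat.factorial_succ]
    push_cast
    ring

theorem tendsto_pow_two_pow_atTop {x : ℕ → ℝ} (hx : Tendsto x atTop atTop) :
    Tendsto (fun n ↦ x n ^ 2 ^ n) atTop atTop :=
  tendsto_atTop_mono' atTop
    ((hx.eventually_ge_atTop 1).mono fun _ h ↦ le_self_pow₀ h (by positivity)) hx

theorem bddAbove_mul_factorial_pow_two_pow_iff {a : ℝ} (ha : 0 ≤ a) :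
    (∃ M : ℝ, ∀ n ≥ 1, (a * n.factorial) ^ 2 ^ n ≤ M) ↔ a = 0 := by
  constructor
  · rintro ⟨M, hM⟩
    by_contra ha0
    have hbase : Tendsto (fun n : ℕ ↦ a * n.factorial) atTop atTop :=
      (tendsto_natCast_atTop_atTop.comp factorial_tendsto_atTop).const_mul_atTop
        (ha.lt_of_ne' ha0)
    obtain ⟨n, hnM, hn1⟩ :=
      (((tendsto_pow_two_pow_atTop hbase).eventually_gt_atTop M).and
        (eventually_ge_atTop 1)).exists
    exact (hnM.trans_le (hM n hn1)).false
  · rintro rfl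
    exact ⟨0, fun n _ ↦ by simp⟩

theorem julia_pair_neg_one_one
    (q : ℕ → Polynomial ℂ)
    (hq1 : q 1 = Polynomial.X ^ 2 - 1)
    (hq : ∀ n ≥ 2, q n = Polynomial.C ((n : ℂ) ^ (2 ^ n)) * Polynomial.X ^ 2) :
    {z : ℂ | ∃ M : ℝ, ∀ n ≥ 1, ‖compEval q n z‖ ≤ M}
      = {-1, 1} := by
  ext z
  have hbdd : (∃ M : ℝ, ∀ n ≥ 1, ‖compEval q n z‖ ≤ M) ↔ √‖z ^ 2 - 1‖ = 0 := by
    rw [← bddAbove_mul_factorial_pow_two_pow_iff (Real.sqrt_nonneg _)]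
    refine exists_congr fun M ↦ forall₂_congr fun n hn ↦ ?_
    rw [norm_compEval_eq_sqrt_mul_factorial_pow hq1 hq z hn]
  simp only [Set.mem_ofPred_eq, hbdd, Real.sqrt_eq_zero (norm_nonneg _), norm_eq_zero,
    sub_eq_zero, sq_eq_one_iff, Set.mem_insert_iff, Set.mem_singleton_iff, or_comm]
end

section
/- Let t_n := (1/2^{n−1})·T_n for n ≥ 1, where T_n is the n-th Chebyshev polynomial of the first kind regarded as a polynomial over ℂ. Then the real segment [−1,1], embedded in ℂ as {z ∈ ℂ : Im z = 0 and −1 ≤ Re z ≤ 1}, is contained in the non-autonomous filled Julia set K[(t_n)] := {z ∈ ℂ : the sequence ((t_n ∘ ⋯ ∘ t_1)(z))_{n≥1} is bounded}. -/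
/-- The `n`-th Chebyshev (minimal) polynomial on `[-1,1]` over `ℂ`:
`t_n = (1/2^(n-1)) T_n`. -/
noncomputable def chebMinimalC (n : ℕ) : Polynomial ℂ :=
  Polynomial.C ((1 : ℂ) / 2 ^ (n - 1)) * Polynomial.Chebyshev.T ℂ (n : ℤ)

/-!
On `[-1, 1]` we have `|T_n| ≤ 1` (as `T_n (cos θ) = cos (n θ)`), and `t_n` only shrinks this
by the factor `2^(1-n) ≤ 1`; so every `t_n` maps the real segment `[-1, 1]` into itself, and
the orbit of a point of the segment stays in the unit disc.
-/

open Polynomial Set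

theorem compEval_mem_of_mapsTo {p : ℕ → ℂ[X]} {s : Set ℂ}
    (hp : ∀ n, MapsTo (p (n + 1)).eval s s) {z : ℂ} (hz : z ∈ s) :
    ∀ n, compEval p n z ∈ s
  | 0 => hz
  | n + 1 => hp n (compEval_mem_of_mapsTo hp hz n)

theorem eval_ofReal_chebMinimalC (n : ℕ) (x : ℝ) :
    (chebMinimalC n).eval (x : ℂ) = ((1 / 2 ^ (n - 1) * (Chebyshev.T ℝ n).eval x : ℝ) : ℂ) := by
  rw [chebMinimalC, eval_mul, eval_C, ← Chebyshev.map_T Complex.ofRealHom, eval_map,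
    ← Complex.ofRealHom_eq_coe, eval₂_at_apply, Complex.ofRealHom_eq_coe]
  push_cast
  rfl

theorem mapsTo_eval_chebMinimalC (n : ℕ) :
    MapsTo (chebMinimalC n).eval ((↑) '' Icc (-1 : ℝ) 1) ((↑) '' Icc (-1 : ℝ) 1) := by
  rintro _ ⟨x, hx, rfl⟩
  refine ⟨_, ?_, (eval_ofReal_chebMinimalC n x).symm⟩
  have hT : |(Chebyshev.T ℝ n).eval x| ≤ 1 := Chebyshev.abs_eval_T_real_le_one n (abs_le.2 hx)
  have hscale : 1 / (2 : ℝ) ^ (n - 1) ≤ 1 :=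
    div_le_one_of_le₀ (one_le_pow₀ one_le_two) (by positivity)
  rw [mem_Icc, ← abs_le, abs_mul, abs_of_pos (by positivity)]
  exact mul_le_one₀ hscale (abs_nonneg _) hT

theorem segment_subset_julia_of_minimal_chebyshev :
    {z : ℂ | z.im = 0 ∧ -1 ≤ z.re ∧ z.re ≤ 1}
      ⊆ {z : ℂ | ∃ M : ℝ, ∀ n ≥ 1, ‖compEval chebMinimalC n z‖ ≤ M} := by
  rintro z ⟨him, hre⟩
  have hz : z ∈ ((↑) '' Icc (-1 : ℝ) 1 : Set ℂ) := ⟨z.re, hre, Complex.ext rfl him.symm⟩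
  refine ⟨1, fun n _ => ?_⟩
  obtain ⟨x, hx, hxz⟩ :=
    compEval_mem_of_mapsTo (fun n => mapsTo_eval_chebMinimalC (n + 1)) hz n
  rw [← hxz, Complex.norm_real, Real.norm_eq_abs]
  exact abs_le.2 hx
end

section
/- Let E_2 := {x + iy ∈ ℂ : (x/(5/4))² + (y/(3/4))² ≤ 1} be the filled ellipse with foci ±1 and semiaxes 5/4 and 3/4, and let T_n be the n-th Chebyshev polynomial of the first kind regarded as a polynomial over ℂ. Then for every n ≥ 1 and every z ∈ E_2 one has |T_n(z)| ≤ (2^n + 2^{−n})/2, and moreover T_n(5/4) = (2^n + 2^{−n})/2, so this bound is attained; equivalently, the maximum of |t_n| on E_2, where t_n := (1/2^{n−1})·T_n, equals 1 + 2^{−2n}. -/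
/-- The filled ellipse with foci `±1` and semiaxes `5/4` and `3/4`. -/
def filledEllipseE2 : Set ℂ :=
  {z : ℂ | (z.re / (5 / 4)) ^ 2 + (z.im / (3 / 4)) ^ 2 ≤ 1}

/-! Write `z = (w + w⁻¹) / 2`. Then `T_n z = (wⁿ + w⁻ⁿ) / 2` and
`‖z - 1‖ + ‖z + 1‖ = ‖w‖ + ‖w‖⁻¹`, so by the focal description of the ellipse (foci `±1`, major
semiaxis `5/4 = (2 + 2⁻¹)/2`) a point of `E_2` comes from some `w` with `1/2 ≤ ‖w‖ ≤ 2`. On that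
annulus `‖wⁿ + w⁻ⁿ‖ ≤ 2ⁿ + 2⁻ⁿ`, with equality at `w = 2`, i.e. at `z = 5/4`. -/

open Polynomial

namespace Polynomial.Chebyshev

theorem C_eval_add_of_mul_eq_one {R : Type*} [CommRing R] {x y : R} (hxy : x * y = 1) (n : ℕ) :
    (C R n).eval (x + y) = x ^ n + y ^ n := by
  rw [← dickson_one_one_eq_chebyshev_C]
  exact dickson_one_one_eval_add_inv x y hxy n

theorem T_eval_add_div_two_of_mul_eq_one {K : Type*} [Field K] [NeZero (2 : K)] {x y : K}
    (hxy : x * y = 1) (n : ℕ) :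
    (T K n).eval ((x + y) / 2) = (x ^ n + y ^ n) / 2 := by
  have h := congrArg (eval ((x + y) / 2)) (C_comp_two_mul_X K n)
  rw [eval_comp, eval_mul, eval_ofNat, eval_X, mul_div_cancel₀ _ two_ne_zero,
    C_eval_add_of_mul_eq_one hxy, eval_mul, eval_ofNat] at h
  rw [h, mul_div_cancel_left₀ _ two_ne_zero]

end Polynomial.Chebyshev

theorem exists_mul_eq_one_add_eq_two_mul {K : Type*} [Field K] [IsAlgClosed K] (z : K) :
    ∃ x y : K, x * y = 1 ∧ x + y = 2 * z := by
  obtain ⟨s, hs⟩ := IsAlgClosed.exists_pow_nat_eq (z ^ 2 - 1) two_pos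
  exact ⟨z + s, z - s, by linear_combination -hs, by ring⟩

section Real

variable {r R : ℝ}

theorem inv_le_and_le_of_add_inv_le (hr : 0 < r) (hR : 1 ≤ R) (h : r + r⁻¹ ≤ R + R⁻¹) :
    R⁻¹ ≤ r ∧ r ≤ R := by
  have hR0 : 0 < R := by linarith
  -- `r * (r + r⁻¹ - (R + R⁻¹)) = (r - R) * (r - R⁻¹)`
  have hprod : (r - R) * (r - R⁻¹) ≤ 0 := by
    have := mul_le_mul_of_nonneg_left h hr.le
    have e1 : r * r⁻¹ = 1 := mul_inv_cancel₀ hr.ne'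
    have e2 : R * R⁻¹ = 1 := mul_inv_cancel₀ hR0.ne'
    nlinarith
  have hRR : R⁻¹ ≤ R := (inv_le_one_of_one_le₀ hR).trans hR
  constructor <;> nlinarith

theorem pow_add_inv_pow_le (hr : 0 < r) (h₁ : R⁻¹ ≤ r) (h₂ : r ≤ R) (n : ℕ) :
    r ^ n + r⁻¹ ^ n ≤ R ^ n + R⁻¹ ^ n := by
  have hR0 : 0 < R := hr.trans_le h₂
  have hfactor : R ^ n + R⁻¹ ^ n - (r ^ n + r⁻¹ ^ n) = (R ^ n - r ^ n) * (1 - (R * r)⁻¹ ^ n) := by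
    have : R ^ n ≠ 0 := by positivity
    have : r ^ n ≠ 0 := by positivity
    simp only [mul_inv, mul_pow, inv_pow]
    field_simp
    ring
  have hpow : r ^ n ≤ R ^ n := pow_le_pow_left₀ hr.le h₂ n
  have hinv : (R * r)⁻¹ ^ n ≤ 1 := by
    apply pow_le_one₀ (by positivity)
    rw [inv_le_one₀ (by positivity)]
    calc 1 = R * R⁻¹ := (mul_inv_cancel₀ hR0.ne').symm
      _ ≤ R * r := by gcongr
  nlinarith [mul_nonneg (sub_nonneg.2 hpow) (sub_nonneg.2 hinv)]

end Real

namespace Complex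

theorem norm_half_add_sub_one_add_norm_half_add_add_one {x y : ℂ} (hxy : x * y = 1) :
    ‖(x + y) / 2 - 1‖ + ‖(x + y) / 2 + 1‖ = ‖x‖ + ‖y‖ := by
  have hsub : (x + y) / 2 - 1 = y * (x - 1) ^ 2 / 2 := by linear_combination (-(x - 2) / 2) * hxy
  have hadd : (x + y) / 2 + 1 = y * (x + 1) ^ 2 / 2 := by linear_combination (-(x + 2) / 2) * hxy
  have hnorm : ‖x‖ * ‖y‖ = 1 := by rw [← norm_mul, hxy, norm_one]
  have hpar := parallelogram_law_with_norm ℝ x 1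
  rw [hsub, hadd]
  simp only [norm_div, norm_mul, norm_pow, Complex.norm_two, norm_one] at hpar ⊢
  linear_combination (‖y‖ / 2) * hpar + ‖x‖ * hnorm

theorem norm_sub_one_add_norm_add_one_le_of_mem_ellipse {a b : ℝ} (ha : 0 < a) (hb : 0 < b)
    (hab : a ^ 2 = b ^ 2 + 1) {z : ℂ} (hz : (z.re / a) ^ 2 + (z.im / b) ^ 2 ≤ 1) :
    ‖z - 1‖ + ‖z + 1‖ ≤ 2 * a := by
  have ha₁ : 1 ≤ a := by nlinarith
  set u := z.re / a
  set v := z.im / b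
  have hre : z.re = a * u := (mul_div_cancel₀ _ ha.ne').symm
  have him : z.im = b * v := (mul_div_cancel₀ _ hb.ne').symm
  have hu : u ^ 2 ≤ 1 := by nlinarith
  -- `(a u - c)² + b² (1 - u²) = (a - c u)²` because `a² - b² = c² = 1`
  have focal (c : ℝ) (hc : c ^ 2 = 1) : ‖z - c‖ ≤ a - c * u := by
    have hcu : c * u ≤ 1 := by nlinarith [sq_nonneg (c - u)]
    rw [← abs_of_nonneg (norm_nonneg _), ← abs_of_nonneg (by linarith : 0 ≤ a - c * u)]
    apply sq_le_sq.1
    rw [Complex.sq_norm, normSq_apply]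
    simp only [sub_re, sub_im, ofReal_re, ofReal_im, hre, him]
    nlinarith
  have h₁ := focal 1 (one_pow 2)
  have h₂ := focal (-1) (by norm_num)
  push_cast at h₁ h₂
  rw [sub_neg_eq_add] at h₂
  linarith

theorem norm_chebyshev_T_eval_le {R : ℝ} (hR : 1 ≤ R) {z : ℂ}
    (hz : ‖z - 1‖ + ‖z + 1‖ ≤ R + R⁻¹) (n : ℕ) :
    ‖(Chebyshev.T ℂ n).eval z‖ ≤ (R ^ n + R⁻¹ ^ n) / 2 := by
  obtain ⟨x, y, hxy, hsum⟩ := exists_mul_eq_one_add_eq_two_mul z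
  obtain rfl : z = (x + y) / 2 := by rw [hsum]; ring
  have hx : 0 < ‖x‖ := norm_pos_iff.2 (left_ne_zero_of_mul_eq_one hxy)
  have hy : ‖y‖ = ‖x‖⁻¹ := eq_inv_of_mul_eq_one_right (by rw [← norm_mul, hxy, norm_one])
  rw [norm_half_add_sub_one_add_norm_half_add_add_one hxy, hy] at hz
  obtain ⟨h₁, h₂⟩ := inv_le_and_le_of_add_inv_le hx hR hz
  rw [Chebyshev.T_eval_add_div_two_of_mul_eq_one hxy, norm_div, Complex.norm_two]
  gcongr
  calc ‖x ^ n + y ^ n‖ ≤ ‖x‖ ^ n + ‖y‖ ^ n := by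
        simpa only [norm_pow] using norm_add_le (x ^ n) (y ^ n)
    _ ≤ R ^ n + R⁻¹ ^ n := hy ▸ pow_add_inv_pow_le hx h₁ h₂ n

end Complex

theorem norm_eval_chebMinimalC (n : ℕ) (z : ℂ) :
    ‖(chebMinimalC n).eval z‖ = ‖(Chebyshev.T ℂ n).eval z‖ / 2 ^ (n - 1) := by
  simp [chebMinimalC, div_eq_inv_mul]

theorem chebyshev_max_on_ellipse (n : ℕ) (hn : 1 ≤ n) :
    (∀ z ∈ filledEllipseE2,
        ‖(Polynomial.Chebyshev.T ℂ (n : ℤ)).eval z‖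
          ≤ ((2 : ℝ) ^ (n : ℤ) + (2 : ℝ) ^ (-(n : ℤ))) / 2) ∧
    (Polynomial.Chebyshev.T ℂ (n : ℤ)).eval ((5 : ℂ) / 4)
        = ((2 : ℂ) ^ (n : ℤ) + (2 : ℂ) ^ (-(n : ℤ))) / 2 ∧
    IsGreatest ((fun z : ℂ => ‖(chebMinimalC n).eval z‖) '' filledEllipseE2)
        (1 + (2 : ℝ) ^ (-(2 * n : ℤ))) := by
  have hbound : ∀ z ∈ filledEllipseE2, ‖(Chebyshev.T ℂ n).eval z‖
      ≤ ((2 : ℝ) ^ (n : ℤ) + (2 : ℝ) ^ (-(n : ℤ))) / 2 := by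
    intro z hz
    have hfoci := Complex.norm_sub_one_add_norm_add_one_le_of_mem_ellipse (by norm_num)
      (by norm_num) (by norm_num) hz
    simpa [zpow_neg] using
      Complex.norm_chebyshev_T_eval_le one_le_two (hfoci.trans_eq (by norm_num)) n
  have hpeak : (Chebyshev.T ℂ n).eval ((5 : ℂ) / 4)
      = ((2 : ℂ) ^ (n : ℤ) + (2 : ℂ) ^ (-(n : ℤ))) / 2 := by
    have h := Chebyshev.T_eval_add_div_two_of_mul_eq_one
      (mul_inv_cancel₀ (two_ne_zero : (2 : ℂ) ≠ 0)) n
    norm_num at h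
    simpa [zpow_neg] using h
  have hscale : ((2 : ℝ) ^ (n : ℤ) + (2 : ℝ) ^ (-(n : ℤ))) / 2 / 2 ^ (n - 1)
      = 1 + (2 : ℝ) ^ (-(2 * n : ℤ)) := by
    obtain ⟨m, rfl⟩ := Nat.exists_eq_add_of_le' hn
    simp only [Nat.add_sub_cancel, zpow_neg, zpow_natCast, mul_comm (2 : ℤ), zpow_mul]
    field_simp
    ring
  refine ⟨hbound, hpeak, ⟨5 / 4, by norm_num [filledEllipseE2], ?_⟩, ?_⟩
  · dsimp only
    rw [norm_eval_chebMinimalC, hpeak, ← hscale,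
      show ((2 : ℂ) ^ (n : ℤ) + (2 : ℂ) ^ (-(n : ℤ))) / 2
        = (((2 : ℝ) ^ (n : ℤ) + (2 : ℝ) ^ (-(n : ℤ))) / 2 : ℝ) by push_cast; rfl,
      Complex.norm_of_nonneg (by positivity)]
  · rintro _ ⟨z, hz, rfl⟩
    dsimp only
    rw [norm_eval_chebMinimalC, ← hscale]
    gcongr
    exact hbound z hz
end
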